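/- Let B be a finite nonempty set of points in ℝ² and R a finite set of points in ℝ². For any closed halfplanes H₁ and H₂ with B ⊆ H₁ ∩ H₂, there exist closed halfplanes H₁' ⊆ H₁ and H₂' ⊆ H₂ such that B ⊆ H₁' ∩ H₂', the boundary line of H₁' contains a point of B, the boundary line of H₂' contains a point of B, and |R ∩ interior(H₁' ∩ H₂')| ≤ |R ∩ interior(H₁ ∩ H₂)|. -/

import Mathlib

open Classical

noncomputable section

/-- Points in the plane. -/
abbrev Pt : Type := EuclideanSpace ℝ (Fin 2)

/-- The closed halfplane `{x : ⟪v, x⟫ ≤ c}`, bounded by the line `{x : ⟪v, x⟫ = c}`. -/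
def halfplane (v : Pt) (c : ℝ) : Set Pt := {x | (inner ℝ v x : ℝ) ≤ c}

/-! Keeping the normals and lowering each offset to the maximum of `⟪vᵢ, b⟫` over the blue
points gives smaller halfplanes whose boundaries touch `B`; a smaller intersection has a smaller
interior, hence no more red points in it. -/

theorem halfplane_mono (v : Pt) {c c' : ℝ} (h : c ≤ c') : halfplane v c ⊆ halfplane v c' :=
  fun _ hx => le_trans hx h

theorem exists_halfplane_le_touching (v : Pt) {c : ℝ} {S : Finset Pt} (hS : S.Nonempty)
    (hSc : (S : Set Pt) ⊆ halfplane v c) :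
    ∃ c' ≤ c, (S : Set Pt) ⊆ halfplane v c' ∧ ∃ b ∈ S, (inner ℝ v b : ℝ) = c' := by
  obtain ⟨b, hb, hmax⟩ := S.exists_mem_eq_sup' hS (fun b => (inner ℝ v b : ℝ))
  exact ⟨_, S.sup'_le hS _ fun x hx => hSc hx,
    fun x hx => S.le_sup' (fun b => (inner ℝ v b : ℝ)) hx, b, hb, hmax.symm⟩

theorem card_filter_interior_le_of_subset {X : Type*} [TopologicalSpace X] (R : Finset X)
    {s t : Set X} (h : s ⊆ t) :
    (R.filter fun p => p ∈ interior s).card ≤ (R.filter fun p => p ∈ interior t).card :=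
  Finset.card_le_card <| Finset.monotone_filter_right R fun _ _ hp => interior_mono h hp

/-- Given two closed halfplanes whose intersection contains all blue points, we
can shrink each of them to a closed halfplane whose boundary line passes through
a blue point, so that the intersection still contains all blue points and its
interior contains at most as many red points. -/
theorem shrink_halfplanes_to_blue (B R : Finset Pt) (hB : B.Nonempty)
    (v₁ v₂ : Pt) (c₁ c₂ : ℝ) (hv₁ : v₁ ≠ 0) (hv₂ : v₂ ≠ 0)
    (hB₁₂ : (B : Set Pt) ⊆ halfplane v₁ c₁ ∩ halfplane v₂ c₂) :
    ∃ (v₁' v₂' : Pt) (c₁' c₂' : ℝ), v₁' ≠ 0 ∧ v₂' ≠ 0 ∧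
      halfplane v₁' c₁' ⊆ halfplane v₁ c₁ ∧
      halfplane v₂' c₂' ⊆ halfplane v₂ c₂ ∧
      (B : Set Pt) ⊆ halfplane v₁' c₁' ∩ halfplane v₂' c₂' ∧
      (∃ b ∈ B, (inner ℝ v₁' b : ℝ) = c₁') ∧
      (∃ b ∈ B, (inner ℝ v₂' b : ℝ) = c₂') ∧
      (R.filter fun p => p ∈ interior (halfplane v₁' c₁' ∩ halfplane v₂' c₂')).card ≤
        (R.filter fun p => p ∈ interior (halfplane v₁ c₁ ∩ halfplane v₂ c₂)).card := by
  obtain ⟨c₁', hc₁, hB₁, hbd₁⟩ :=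
    exists_halfplane_le_touching v₁ hB (hB₁₂.trans Set.inter_subset_left)
  obtain ⟨c₂', hc₂, hB₂, hbd₂⟩ :=
    exists_halfplane_le_touching v₂ hB (hB₁₂.trans Set.inter_subset_right)
  have hsub₁ := halfplane_mono v₁ hc₁
  have hsub₂ := halfplane_mono v₂ hc₂
  exact ⟨v₁, v₂, c₁', c₂', hv₁, hv₂, hsub₁, hsub₂, Set.subset_inter hB₁ hB₂, hbd₁, hbd₂,
    card_filter_interior_le_of_subset R (Set.inter_subset_inter hsub₁ hsub₂)⟩
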